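/- arXiv:2101.03534 — 5 statements merged into one kernel-verified Lean document; each statement's English description precedes it below -/
import Mathlib

section
/- Let θ : ℝ^m → (ℝ^m)^* be a smooth map into the dual space (a smooth 1-form on ℝ^m). Then there exists s ∈ ℝ^m such that the zero set {x ∈ ℝ^m : θ(x) + ℓ_s = 0} of the 1-form β(x) = θ(x) + ℓ_s is a discrete subset of ℝ^m, where ℓ_s ∈ (ℝ^m)^* is the linear functional ℓ_s(v) = ⟨s, v⟩. (Since β differs from θ by the differential of the linear function x ↦ ⟨s, x⟩, β is a primitive of the exact 2-form dθ whose zero set is discrete.) -/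
open Set

noncomputable section

/-- For every smooth 1-form `θ : ℝ^m → (ℝ^m)^*` there is an `s ∈ ℝ^m` such that the
zero set of the 1-form `β(x) = θ(x) + ⟨s, ·⟩` is a discrete subset of `ℝ^m`. -/
theorem exists_shift_with_discrete_zero_set (m : ℕ)
    (θ : EuclideanSpace ℝ (Fin m) → (EuclideanSpace ℝ (Fin m) →L[ℝ] ℝ))
    (hθ : ContDiff ℝ (⊤ : ℕ∞) θ) :
    ∃ s : EuclideanSpace ℝ (Fin m),
      ∀ x : EuclideanSpace ℝ (Fin m), θ x + innerSL ℝ s = 0 →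
        ∃ U ∈ nhds x, ∀ y ∈ U, θ y + innerSL ℝ s = 0 → y = x := by
  set E := EuclideanSpace ℝ (Fin m)
  set F : E → E := fun x => -((InnerProductSpace.toDual ℝ E).symm (θ x)) with hFdef
  have hF : ContDiff ℝ (⊤ : ℕ∞) F :=
    (((InnerProductSpace.toDual ℝ E).symm.contDiff).comp hθ).neg
  have hFd : Differentiable ℝ F := hF.differentiable (by simp)
  -- key equivalence: θ x + innerSL s = 0 ↔ F x = s
  have key : ∀ (s x : E), (θ x + innerSL ℝ s = 0 ↔ F x = s) := by
    intro s x
    constructor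
    · intro h
      have hx : θ x = -(innerSL ℝ s) := eq_neg_of_add_eq_zero_left h
      simp only [hFdef, hx, map_neg, neg_neg]
      apply (InnerProductSpace.toDual ℝ E).injective
      ext v
      simp [InnerProductSpace.toDual_apply_apply]
    · intro h
      have h' : -((InnerProductSpace.toDual ℝ E).symm (θ x)) = s := h
      have : (InnerProductSpace.toDual ℝ E).symm (θ x) = -s := neg_eq_iff_eq_neg.mp h'
      have hθx : θ x = InnerProductSpace.toDual ℝ E (-s) := by
        rw [← this, LinearIsometryEquiv.apply_symm_apply]
      ext v
      simp [hθx, InnerProductSpace.toDual_apply_apply, real_inner_comm]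
      exact neg_add_cancel _
  -- the critical set
  set C : Set E := {x | (fderiv ℝ F x).det = 0} with hCdef
  have himg : MeasureTheory.volume (F '' C) = 0 := by
    apply MeasureTheory.addHaar_image_eq_zero_of_det_fderivWithin_eq_zero
      MeasureTheory.volume (f' := fun x => fderiv ℝ F x)
    · intro x _
      exact (hFd x).hasFDerivAt.hasFDerivWithinAt
    · intro x hx
      exact hx
  have hne : F '' C ≠ univ := by
    intro h
    rw [h] at himg
    exact (isOpen_univ.measure_pos MeasureTheory.volume univ_nonempty).ne' himg
  obtain ⟨s, hs⟩ : ∃ s : E, s ∉ F '' C := by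
    by_contra h
    push_neg at h
    exact hne (eq_univ_of_forall h)
  refine ⟨s, fun x hx => ?_⟩
  have hFx : F x = s := (key s x).1 hx
  have hxC : x ∉ C := fun hxC => hs ⟨x, hxC, hFx⟩
  have hdet : (fderiv ℝ F x).det ≠ 0 := hxC
  -- the derivative is a linear equivalence
  let e : E ≃L[ℝ] E :=
    (LinearMap.equivOfDetNeZero (fderiv ℝ F x).toLinearMap hdet).toContinuousLinearEquiv
  have he : (e : E →L[ℝ] E) = fderiv ℝ F x := by
    ext v; rfl
  have hstrict : HasStrictFDerivAt F (e : E →L[ℝ] E) x := by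
    rw [he]
    exact hF.contDiffAt.hasStrictFDerivAt (by simp)
  refine ⟨(hstrict.toOpenPartialHomeomorph F).source,
    (hstrict.toOpenPartialHomeomorph F).open_source.mem_nhds
      hstrict.mem_toOpenPartialHomeomorph_source, fun y hy hy0 => ?_⟩
  have hFy : F y = s := (key s y).1 hy0
  have : F y = F x := by rw [hFy, hFx]
  have hinj := (hstrict.toOpenPartialHomeomorph F).injOn
  apply hinj hy hstrict.mem_toOpenPartialHomeomorph_source
  simpa [hstrict.toOpenPartialHomeomorph_coe] using this
end
end

section
/- Let B be a smooth manifold, let C ⊆ B be a closed subset, and let λ : B → ℝ be a smooth function with −1 < λ(p) ≤ 1 for all p. Then there exists a smooth function v : B × (−1,1) → [0,∞) such that, writing (S(p,x), T(p,x)) for the domain of the maximal solution γ of γ'(t) = v(p, γ(t)), γ(0) = x, valued in (−1,1): (i) T(p,x) ≤ 1 if and only if p ∈ C and λ(p) ≤ x < 1; and (ii) S(p,x) = −∞ for all (p,x) ∈ B × (−1,1). -/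
/-!
Write `G = travelTime (l p) (f p)`, where `f ≥ 0` is smooth with zero set `C`, and take
`v(p, ·) = 1 / G'`. As `G` is strictly increasing on `(-1, 1)`, `t ↦ G(γ t)` has unit speed along
every solution, so a solution on `[α, β]` through `x` exists iff `G x + α` and `G x + β` lie in
the range of `G`. The term `-E(a - x)/(1 + x)` (with `E = expNegInvGlue`) sends `G` to `-∞` at `-1`
and vanishes for `x ≥ a`; `c/(1 - x)` sends it to `+∞` at `1` when `c > 0`; and when `c = 0`,
`-logb 2 (2 - a - x)` makes the supremum of `G` exactly `G a + 1`, so the range contains `G x + 1`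
iff `x < a`.
-/

open Set Filter Topology Function
open scoped ContDiff Manifold

section ReparametrizedFlow

variable {G G' : ℝ → ℝ} {s : Set ℝ}

theorem apply_eq_add_of_hasDerivAt_inv (hG : ∀ y ∈ s, HasDerivAt G (G' y) y)
    (hG' : ∀ y ∈ s, G' y ≠ 0) {γ : ℝ → ℝ} {a b : ℝ}
    (hγ : ∀ t ∈ Icc a b, γ t ∈ s ∧ HasDerivAt γ (G' (γ t))⁻¹ t) :
    ∀ t ∈ Icc a b, G (γ t) = G (γ a) + (t - a) := by
  have hderiv : ∀ t ∈ Icc a b, HasDerivAt (fun t => G (γ t) - t) 0 t := by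
    intro t ht
    obtain ⟨hγt, hγ't⟩ := hγ t ht
    have h := ((hG _ hγt).comp t hγ't).sub (hasDerivAt_id t)
    rwa [mul_inv_cancel₀ (hG' _ hγt), sub_self] at h
  have hconst := constant_of_has_deriv_right_zero
    (fun t ht => (hderiv t ht).continuousAt.continuousWithinAt)
    (fun t ht => (hderiv t (Ico_subset_Icc_self ht)).hasDerivWithinAt)
  intro t ht
  linarith [hconst t ht]

theorem strictMonoOn_of_hasDerivAt_pos (hs : IsPreconnected s)
    (hG : ∀ y ∈ s, HasDerivAt G (G' y) y) (hG' : ∀ y ∈ s, 0 < G' y) : StrictMonoOn G s :=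
  strictMonoOn_of_hasDerivWithinAt_pos (Real.convex_iff_isPreconnected.2 hs)
    (fun y hy => (hG y hy).continuousAt.continuousWithinAt)
    (fun y hy => (hG y (interior_subset hy)).hasDerivWithinAt)
    (fun y hy => hG' y (interior_subset hy))

theorem image_mem_nhds_of_strictMonoOn (hs : IsOpen s) (hs' : IsPreconnected s)
    (hG : ContinuousOn G s) (hmono : StrictMonoOn G s) {z : ℝ} (hz : z ∈ s) :
    G '' s ∈ 𝓝 (G z) := by
  have hnhds : ∀ᶠ y in 𝓝 z, y ∈ s := hs.mem_nhds hz
  obtain ⟨u, hu, huz⟩ := ((hnhds.filter_mono nhdsWithin_le_nhds).and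
    (self_mem_nhdsWithin : ∀ᶠ y in 𝓝[<] z, y < z)).exists
  obtain ⟨w, hw, hzw⟩ := ((hnhds.filter_mono nhdsWithin_le_nhds).and
    (self_mem_nhdsWithin : ∀ᶠ y in 𝓝[>] z, z < y)).exists
  exact mem_of_superset (Icc_mem_nhds (hmono hu hz huz) (hmono hz hw hzw))
    ((hs'.image G hG).Icc_subset (mem_image_of_mem G hu) (mem_image_of_mem G hw))

theorem hasDerivAt_invFunOn_of_hasDerivAt_pos (hs : IsOpen s) (hs' : IsPreconnected s)
    (hG : ∀ y ∈ s, HasDerivAt G (G' y) y) (hG' : ∀ y ∈ s, 0 < G' y) {y : ℝ}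
    (hy : y ∈ G '' s) : HasDerivAt (invFunOn G s) (G' (invFunOn G s y))⁻¹ y := by
  have hcont : ContinuousOn G s := fun y hy => (hG y hy).continuousAt.continuousWithinAt
  have hmono := strictMonoOn_of_hasDerivAt_pos hs' hG hG'
  have hinv : ∀ y ∈ G '' s, invFunOn G s y ∈ s ∧ G (invFunOn G s y) = y :=
    fun y hy => ⟨invFunOn_mem hy, invFunOn_eq hy⟩
  have himage : G '' s ∈ 𝓝 y := by
    obtain ⟨z, hz, rfl⟩ := hy
    exact image_mem_nhds_of_strictMonoOn hs hs' hcont hmono hz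
  have hinv_mono : MonotoneOn (invFunOn G s) (G '' s) := fun y₁ hy₁ y₂ hy₂ h => by
    rw [← hmono.le_iff_le (hinv y₁ hy₁).1 (hinv y₂ hy₂).1, (hinv y₁ hy₁).2, (hinv y₂ hy₂).2]
    exact h
  have hinv_cont : ContinuousAt (invFunOn G s) y := by
    refine continuousAt_of_monotoneOn_of_image_mem_nhds hinv_mono himage ?_
    rw [hmono.injOn.leftInvOn_invFunOn.image_image]
    exact hs.mem_nhds (hinv y hy).1
  exact HasDerivAt.of_local_left_inverse hinv_cont (hG _ (hinv y hy).1) (hG' _ (hinv y hy).1).ne'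
    (eventually_of_mem himage fun y hy => (hinv y hy).2)

theorem exists_solution_inv_deriv_iff_mem_image (hs : IsOpen s) (hs' : IsPreconnected s)
    (hG : ∀ y ∈ s, HasDerivAt G (G' y) y) (hG' : ∀ y ∈ s, 0 < G' y) {x α β : ℝ}
    (hx : x ∈ s) (hα : α ≤ 0) (hβ : 0 ≤ β) :
    (∃ γ : ℝ → ℝ, γ 0 = x ∧ ∀ t ∈ Icc α β, γ t ∈ s ∧ HasDerivAt γ (G' (γ t))⁻¹ t) ↔
      G x + α ∈ G '' s ∧ G x + β ∈ G '' s := by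
  constructor
  · rintro ⟨γ, rfl, hγ⟩
    have hαβ : α ≤ β := hα.trans hβ
    have hadd := apply_eq_add_of_hasDerivAt_inv hG (fun y hy => (hG' y hy).ne') hγ
    have h₀ := hadd 0 ⟨hα, hβ⟩
    have h_β := hadd β ⟨hαβ, le_rfl⟩
    exact ⟨⟨γ α, (hγ α ⟨le_rfl, hαβ⟩).1, by linarith⟩, ⟨γ β, (hγ β ⟨hαβ, le_rfl⟩).1, by linarith⟩⟩
  · rintro ⟨hα', hβ'⟩
    have hcont : ContinuousOn G s := fun y hy => (hG y hy).continuousAt.continuousWithinAt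
    have hsub : Icc (G x + α) (G x + β) ⊆ G '' s := (hs'.image G hcont).Icc_subset hα' hβ'
    refine ⟨fun t => invFunOn G s (G x + t), ?_, fun t ht => ?_⟩
    · simpa using (strictMonoOn_of_hasDerivAt_pos hs' hG hG').injOn.leftInvOn_invFunOn hx
    · have hy : G x + t ∈ G '' s := hsub ⟨by linarith [ht.1], by linarith [ht.2]⟩
      exact ⟨invFunOn_mem hy,
        (hasDerivAt_invFunOn_of_hasDerivAt_pos hs hs' hG hG' hy).comp_const_add _ _⟩

end ReparametrizedFlow

namespace NullField

noncomputable def travelTime (a c x : ℝ) : ℝ :=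
  -Real.logb 2 (2 - a - x) - expNegInvGlue (a - x) / (1 + x) + c / (1 - x)

noncomputable def travelTimeDeriv (a c x : ℝ) : ℝ :=
  1 / ((2 - a - x) * Real.log 2) + deriv expNegInvGlue (a - x) / (1 + x)
    + expNegInvGlue (a - x) / (1 + x) ^ 2 + c / (1 - x) ^ 2

variable {a c x : ℝ}

theorem hasDerivAt_travelTime (ha : a ≤ 1) (hx : x ∈ Ioo (-1 : ℝ) 1) :
    HasDerivAt (travelTime a c) (travelTimeDeriv a c x) x := by
  obtain ⟨hx₁, hx₂⟩ := hx
  have hE : HasDerivAt (fun y => expNegInvGlue (a - y)) (deriv expNegInvGlue (a - x) * -1) x :=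
    ((expNegInvGlue.contDiff (n := 1)).differentiable one_ne_zero (a - x)).hasDerivAt.comp x
      ((hasDerivAt_id' x).const_sub a)
  have hlog := ((Real.hasDerivAt_log (by linarith : 2 - a - x ≠ 0)).comp x
    ((hasDerivAt_id' x).const_sub (2 - a))).div_const (Real.log 2)
  refine ((hlog.neg.sub (hE.div ((hasDerivAt_id' x).const_add 1) (by linarith))).add
    ((hasDerivAt_const x c).div ((hasDerivAt_id' x).const_sub 1) (by linarith))).congr_deriv ?_
  have : Real.log 2 ≠ 0 := by positivity
  have : 2 - a - x ≠ 0 := by linarith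
  have : 1 + x ≠ 0 := by linarith
  have : 1 - x ≠ 0 := by linarith
  unfold travelTimeDeriv
  field_simp
  ring

theorem travelTimeDeriv_pos (ha : a ≤ 1) (hc : 0 ≤ c) (hx : x ∈ Ioo (-1 : ℝ) 1) :
    0 < travelTimeDeriv a c x := by
  obtain ⟨hx₁, hx₂⟩ := hx
  have h₁ : 0 < 2 - a - x := by linarith
  have h₂ : 0 < 1 + x := by linarith
  have hE := expNegInvGlue.nonneg (a - x)
  have hE' : 0 ≤ deriv expNegInvGlue (a - x) := expNegInvGlue.monotone.deriv_nonneg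
  unfold travelTimeDeriv
  positivity

theorem strictMonoOn_travelTime (ha : a ≤ 1) (hc : 0 ≤ c) :
    StrictMonoOn (travelTime a c) (Ioo (-1) 1) :=
  strictMonoOn_of_hasDerivAt_pos isPreconnected_Ioo (fun _ hx => hasDerivAt_travelTime ha hx)
    (fun _ hx => travelTimeDeriv_pos ha hc hx)

theorem Icc_subset_image_travelTime (ha : a ≤ 1) {u w : ℝ} (hu : u ∈ Ioo (-1 : ℝ) 1)
    (hw : w ∈ Ioo (-1 : ℝ) 1) :
    Icc (travelTime a c u) (travelTime a c w) ⊆ travelTime a c '' Ioo (-1) 1 :=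
  (isPreconnected_Ioo.image _ fun _ hx =>
    (hasDerivAt_travelTime ha hx).continuousAt.continuousWithinAt).Icc_subset
    (mem_image_of_mem _ hu) (mem_image_of_mem _ hw)

theorem tendsto_travelTime_nhdsGT_neg_one (ha : -1 < a) (ha' : a ≤ 1) :
    Tendsto (travelTime a c) (𝓝[>] (-1)) atBot := by
  have hlog : 2 - a - -1 ≠ 0 := ne_of_gt (by linarith)
  have hregular : ContinuousAt (fun x => -Real.logb 2 (2 - a - x) + c / (1 - x)) (-1) := by
    fun_prop (disch := first | assumption | norm_num)
  have hE : Continuous fun x => expNegInvGlue (a - x) :=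
    (expNegInvGlue.contDiff (n := 0)).continuous.comp (continuous_sub_left a)
  have hinv : Tendsto (fun x : ℝ => (1 + x)⁻¹) (𝓝[>] (-1)) atTop := by
    refine Tendsto.inv_tendsto_nhdsGT_zero ?_
    have h := (continuous_const_add (1 : ℝ)).continuousWithinAt.tendsto_nhdsWithin (x := -1)
      (fun x (hx : x ∈ Ioi (-1)) => (neg_lt_iff_pos_add'.1 hx : 1 + x ∈ Ioi 0))
    rwa [add_neg_cancel] at h
  refine ((hregular.tendsto.mono_left nhdsWithin_le_nhds).add_atBot
    (tendsto_neg_atTop_atBot.comp ((hE.tendsto (-1)).mono_left nhdsWithin_le_nhds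
      |>.pos_mul_atTop (expNegInvGlue.pos_of_pos (by linarith)) hinv))).congr fun x => ?_
  simp only [travelTime, comp_apply, div_eq_mul_inv]
  ring

theorem tendsto_travelTime_nhdsLT_one (ha : -1 < a) (ha' : a ≤ 1) (hc : 0 ≤ c)
    (h : a = 1 ∨ 0 < c) : Tendsto (travelTime a c) (𝓝[<] 1) atTop := by
  have hsub : Tendsto (fun x : ℝ => 1 - x) (𝓝[<] 1) (𝓝[>] 0) := by
    have h := (continuous_sub_left (1 : ℝ)).continuousWithinAt.tendsto_nhdsWithin (x := 1)
      (fun x (hx : x ∈ Iio 1) => (sub_pos.2 hx : 1 - x ∈ Ioi 0))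
    rwa [sub_self] at h
  have hnear : ∀ᶠ x in 𝓝[<] 1, x ∈ Ico (0 : ℝ) 1 := Ico_mem_nhdsLT (by norm_num)
  have hbound : ∀ x ∈ Ico (0 : ℝ) 1,
      -Real.logb 2 (2 - a - x) - expNegInvGlue 1 + c / (1 - x) ≤ travelTime a c x := by
    intro x hx
    have hE : expNegInvGlue (a - x) / (1 + x) ≤ expNegInvGlue 1 :=
      (div_le_self (expNegInvGlue.nonneg _) (by linarith [hx.1])).trans
        (expNegInvGlue.monotone (by linarith [hx.1]))
    unfold travelTime
    linarith
  rcases h with rfl | hc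
  · have hlog : Tendsto (fun x => -Real.logb 2 (1 - x) + -expNegInvGlue 1) (𝓝[<] 1) atTop :=
      tendsto_atTop_add_const_right _ _
        (tendsto_neg_atBot_atTop.comp ((Real.tendsto_logb_nhdsGT_zero one_lt_two).comp hsub))
    refine tendsto_atTop_mono' _ ?_ hlog
    filter_upwards [hnear] with x hx
    have hx' := hbound x hx
    have : 0 ≤ c / (1 - x) := div_nonneg hc (by linarith [hx.2])
    rw [show (2 : ℝ) - 1 - x = 1 - x by ring] at hx'
    linarith
  · refine tendsto_atTop_mono' _ ?_ (tendsto_atTop_add_const_left _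
      (-Real.logb 2 3 - expNegInvGlue 1) (hsub.inv_tendsto_nhdsGT_zero.const_mul_atTop hc))
    filter_upwards [hnear] with x hx
    have hlog : Real.logb 2 (2 - a - x) ≤ Real.logb 2 3 :=
      Real.logb_le_logb_of_le one_lt_two (by linarith [hx.2]) (by linarith [hx.1])
    have := hbound x hx
    simp only [Pi.inv_apply, ← div_eq_mul_inv]
    linarith

theorem travelTime_zero_self_add_one (ha : a < 1) :
    travelTime a 0 a + 1 = -Real.logb 2 (1 - a) := by
  have h : 2 - a - a = 2 * (1 - a) := by ring
  simp only [travelTime, sub_self, expNegInvGlue.zero, zero_div, h,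
    Real.logb_mul two_ne_zero (by linarith : 1 - a ≠ 0), Real.logb_self_eq_one one_lt_two]
  ring

theorem travelTime_zero_lt (ha : a < 1) (hx : x ∈ Ioo (-1 : ℝ) 1) :
    travelTime a 0 x < -Real.logb 2 (1 - a) := by
  have hlog : Real.logb 2 (1 - a) < Real.logb 2 (2 - a - x) :=
    Real.logb_lt_logb one_lt_two (by linarith) (by linarith [hx.2])
  have hE : 0 ≤ expNegInvGlue (a - x) / (1 + x) :=
    div_nonneg (expNegInvGlue.nonneg _) (by linarith [hx.1])
  simp only [travelTime, zero_div, add_zero]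
  linarith

theorem tendsto_travelTime_zero_nhdsLT_one (ha : a < 1) :
    Tendsto (travelTime a 0) (𝓝[<] 1) (𝓝 (-Real.logb 2 (1 - a))) := by
  have hE : Continuous expNegInvGlue := (expNegInvGlue.contDiff (n := 0)).continuous
  have hlog : 2 - a - 1 ≠ 0 := ne_of_gt (by linarith)
  have hcont :
      ContinuousAt (fun x => -Real.logb 2 (2 - a - x) - expNegInvGlue (a - x) / (1 + x)) 1 := by
    fun_prop (disch := first | assumption | norm_num)
  have hval :
      -Real.logb 2 (2 - a - 1) - expNegInvGlue (a - 1) / (1 + 1) = -Real.logb 2 (1 - a) := by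
    rw [expNegInvGlue.zero_of_nonpos (by linarith)]
    ring_nf
  rw [← hval]
  refine (hcont.tendsto.mono_left nhdsWithin_le_nhds).congr fun x => ?_
  simp only [travelTime, zero_div, add_zero]

theorem travelTime_add_one_mem_image_iff (ha : -1 < a) (ha' : a ≤ 1) (hc : 0 ≤ c)
    (hx : x ∈ Ioo (-1 : ℝ) 1) :
    travelTime a c x + 1 ∈ travelTime a c '' Ioo (-1) 1 ↔ ¬ (c = 0 ∧ a ≤ x) := by
  constructor
  · rintro ⟨w, hw, hGw⟩ ⟨rfl, hax⟩
    have ha₁ : a < 1 := hax.trans_lt hx.2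
    have hmono := (strictMonoOn_travelTime ha' le_rfl).monotoneOn ⟨ha, ha₁⟩ hx hax
    have := travelTime_zero_lt ha₁ hw
    have := travelTime_zero_self_add_one ha₁
    linarith
  · intro h
    suffices ∀ᶠ w in 𝓝[<] 1, travelTime a c x + 1 ≤ travelTime a c w by
      obtain ⟨w, hle, hw⟩ := (this.and (Ioo_mem_nhdsLT (by norm_num : (-1 : ℝ) < 1))).exists
      exact Icc_subset_image_travelTime ha' hx hw ⟨by linarith, hle⟩
    by_cases hblowup : a = 1 ∨ 0 < c
    · exact (tendsto_travelTime_nhdsLT_one ha ha' hc hblowup).eventually_ge_atTop _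
    · rw [not_or, not_lt] at hblowup
      obtain rfl : c = 0 := le_antisymm hblowup.2 hc
      have ha₁ : a < 1 := lt_of_le_of_ne ha' hblowup.1
      have hxa : x < a := lt_of_not_ge fun hax => h ⟨rfl, hax⟩
      have hlt := strictMonoOn_travelTime ha' le_rfl hx ⟨ha, ha₁⟩ hxa
      have := travelTime_zero_self_add_one ha₁
      exact (tendsto_travelTime_zero_nhdsLT_one ha₁).eventually (eventually_ge_nhds (by linarith))

theorem Iic_subset_image_travelTime (ha : -1 < a) (ha' : a ≤ 1) (hx : x ∈ Ioo (-1 : ℝ) 1) :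
    Iic (travelTime a c x) ⊆ travelTime a c '' Ioo (-1) 1 := fun y hy => by
  obtain ⟨u, hle, hu⟩ := ((tendsto_travelTime_nhdsGT_neg_one ha ha').eventually_le_atBot y).and
    (Ioo_mem_nhdsGT (by norm_num : (-1 : ℝ) < 1)) |>.exists
  exact Icc_subset_image_travelTime ha' hu hx ⟨hle, hy⟩

theorem contDiffAt_inv_travelTimeDeriv {z : ℝ × ℝ × ℝ} (ha : z.1 ≤ 1) (hc : 0 ≤ z.2.1)
    (hx : z.2.2 ∈ Ioo (-1 : ℝ) 1) :
    ContDiffAt ℝ ∞ (fun z : ℝ × ℝ × ℝ => (travelTimeDeriv z.1 z.2.1 z.2.2)⁻¹) z := by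
  have hE : ContDiff ℝ ∞ expNegInvGlue := expNegInvGlue.contDiff (n := ⊤)
  have hE' : ContDiff ℝ ∞ (deriv expNegInvGlue) := hE.deriv'
  have hpos := (travelTimeDeriv_pos ha hc hx).ne'
  have h₁ : (2 - z.1 - z.2.2) * Real.log 2 ≠ 0 := mul_ne_zero (by linarith [hx.2]) (by positivity)
  have h₂ : 1 + z.2.2 ≠ 0 := by linarith [hx.1]
  have h₃ : 1 - z.2.2 ≠ 0 := by linarith [hx.2]
  unfold travelTimeDeriv at hpos ⊢
  fun_prop (disch := first | assumption | exact pow_ne_zero _ ‹_›)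

end NullField

open NullField in
theorem exists_null_field_excising_epigraph_general
    {E : Type*} [NormedAddCommGroup E] [NormedSpace ℝ E] [FiniteDimensional ℝ E]
    {H : Type*} [TopologicalSpace H] (I : ModelWithCorners ℝ E H)
    {B : Type*} [TopologicalSpace B] [ChartedSpace H B]
    [IsManifold I ((⊤ : ℕ∞) : WithTop ℕ∞) B] [T2Space B] [SecondCountableTopology B]
    (C : Set B) (hC : IsClosed C)
    (l : B → ℝ) (hl : ContMDiff I 𝓘(ℝ, ℝ) (⊤ : ℕ∞) l)
    (hl_range : ∀ p, l p ∈ Ioc (-1 : ℝ) 1) :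
    ∃ v : B × ℝ → ℝ,
      ContMDiffOn (I.prod 𝓘(ℝ, ℝ)) 𝓘(ℝ, ℝ) (⊤ : ℕ∞) v (univ ×ˢ Ioo (-1 : ℝ) 1) ∧
      (∀ p : B, ∀ x ∈ Ioo (-1 : ℝ) 1, 0 ≤ v (p, x)) ∧
      -- (i) T(p,x) ≤ 1 ↔ (p ∈ C ∧ l p ≤ x < 1)
      (∀ p : B, ∀ x ∈ Ioo (-1 : ℝ) 1,
        ((∃ γ : ℝ → ℝ, γ 0 = x ∧
            ∀ t ∈ Icc (0:ℝ) 1, γ t ∈ Ioo (-1 : ℝ) 1 ∧ HasDerivAt γ (v (p, γ t)) t)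
          ↔ ¬ (p ∈ C ∧ l p ≤ x))) ∧
      -- (ii) S(p,x) = -∞
      (∀ p : B, ∀ x ∈ Ioo (-1 : ℝ) 1, ∀ T : ℝ, 0 < T →
        ∃ γ : ℝ → ℝ, γ 0 = x ∧
          ∀ t ∈ Icc (-T) 0, γ t ∈ Ioo (-1 : ℝ) 1 ∧ HasDerivAt γ (v (p, γ t)) t) := by
  have : LocallyCompactSpace B := Manifold.locallyCompact_of_finiteDimensional I
  obtain ⟨f, hf, hf_range, hf_zero, -⟩ := exists_contMDiff_zero_iff_one_iff_of_isClosed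
    (n := (⊤ : ℕ∞)) I hC isClosed_empty (disjoint_empty C)
  have hf_nonneg : ∀ p, 0 ≤ f p := fun p => (hf_range (mem_range_self p)).1
  have hflow := fun p {x α β : ℝ} =>
    exists_solution_inv_deriv_iff_mem_image (x := x) (α := α) (β := β) isOpen_Ioo
      isPreconnected_Ioo (fun _ hy => hasDerivAt_travelTime (c := f p) (hl_range p).2 hy)
      (fun _ hy => travelTimeDeriv_pos (hl_range p).2 (hf_nonneg p) hy)
  refine ⟨fun q => (travelTimeDeriv (l q.1) (f q.1) q.2)⁻¹, fun q hq => ?_, fun p x hx => ?_,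
    fun p x hx => ?_, fun p x hx T hT => ?_⟩
  · exact ((contDiffAt_inv_travelTimeDeriv (hl_range q.1).2 (hf_nonneg q.1) hq.2).comp_contMDiffAt
      ((hl.comp contMDiff_fst).prodMk_space
        ((hf.comp contMDiff_fst).prodMk_space contMDiff_snd)).contMDiffAt).contMDiffWithinAt
  · exact inv_nonneg.2 (travelTimeDeriv_pos (hl_range p).2 (hf_nonneg p) hx).le
  · refine (hflow p hx le_rfl zero_le_one).trans ?_
    rw [hf_zero p, add_zero, and_iff_right (mem_image_of_mem _ hx)]
    exact travelTime_add_one_mem_image_iff (hl_range p).1 (hl_range p).2 (hf_nonneg p) hx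
  · have hsub := Iic_subset_image_travelTime (c := f p) (hl_range p).1 (hl_range p).2 hx
    exact (hflow p hx (neg_nonpos.2 hT.le) le_rfl).2
      ⟨hsub (by simp [hT.le]), hsub (by simp)⟩

/-- Let `B` be a smooth manifold, `C ⊆ B` closed, and `l : B → ℝ` smooth with values in
`(-1, 1]`.  Then there is a smooth `v : B × (-1,1) → [0,∞)` such that, for the
parametrized ODE `γ' = v(p, γ)` valued in `(-1,1)`:
(i) the forward escape time satisfies `T(p,x) ≤ 1` (no solution on `[0,1]`) iff
`p ∈ C` and `l(p) ≤ x < 1`; and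
(ii) the backward escape time is `-∞` everywhere (solutions exist on `[-T,0]` for
every `T > 0`). -/
theorem exists_null_field_excising_epigraph
    {E : Type*} [NormedAddCommGroup E] [NormedSpace ℝ E] [FiniteDimensional ℝ E]
    {H : Type*} [TopologicalSpace H] (I : ModelWithCorners ℝ E H) [I.Boundaryless]
    {B : Type*} [TopologicalSpace B] [ChartedSpace H B]
    [IsManifold I ((⊤ : ℕ∞) : WithTop ℕ∞) B] [T2Space B] [SecondCountableTopology B]
    (C : Set B) (hC : IsClosed C)
    (l : B → ℝ) (hl : ContMDiff I 𝓘(ℝ, ℝ) (⊤ : ℕ∞) l)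
    (hl_range : ∀ p, l p ∈ Ioc (-1 : ℝ) 1) :
    ∃ v : B × ℝ → ℝ,
      ContMDiffOn (I.prod 𝓘(ℝ, ℝ)) 𝓘(ℝ, ℝ) (⊤ : ℕ∞) v (univ ×ˢ Ioo (-1 : ℝ) 1) ∧
      (∀ p : B, ∀ x ∈ Ioo (-1 : ℝ) 1, 0 ≤ v (p, x)) ∧
      -- (i) T(p,x) ≤ 1 ↔ (p ∈ C ∧ l p ≤ x < 1)
      (∀ p : B, ∀ x ∈ Ioo (-1 : ℝ) 1,
        ((∃ γ : ℝ → ℝ, γ 0 = x ∧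
            ∀ t ∈ Icc (0:ℝ) 1, γ t ∈ Ioo (-1 : ℝ) 1 ∧ HasDerivAt γ (v (p, γ t)) t)
          ↔ ¬ (p ∈ C ∧ l p ≤ x))) ∧
      -- (ii) S(p,x) = -∞
      (∀ p : B, ∀ x ∈ Ioo (-1 : ℝ) 1, ∀ T : ℝ, 0 < T →
        ∃ γ : ℝ → ℝ, γ 0 = x ∧
          ∀ t ∈ Icc (-T) 0, γ t ∈ Ioo (-1 : ℝ) 1 ∧ HasDerivAt γ (v (p, γ t)) t) :=
  exists_null_field_excising_epigraph_general I C hC l hl hl_range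
end

section
/- Let B be a smooth manifold, let C ⊆ B be a closed subset, let λ : B → ℝ be smooth with −1 < λ(p) ≤ 1 for all p, and let Z = {(p,x) ∈ B × (−1,1) : p ∈ C and x ≥ λ(p)} (the epigraph of λ over C). Then there exists a smooth function v : B × (−1,1) → [0,∞) such that: (i) the maximal solution of γ' = v(p, γ), γ(0) = x, valued in (−1,1), is defined at least on [0,1] if and only if (p,x) ∉ Z, and is defined on (−∞, 0] for every (p,x); and (ii) the time-1 flow map of the vector field v(p,x) ∂/∂x, namely Ψ(p,x) = (p, γ_{p,x}(1)), is a diffeomorphism from (B × (−1,1)) ∖ Z onto B × (−1,1) that preserves the B-coordinate (hence a presymplectomorphism for any presymplectic form on B × (−1,1) pulled back from B). -/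
/-!
Let `cayley y = (1 - y) / (1 + y)` and, for `b ≥ 0`, `straighten b y = b / cayley y - cayley y`.
On `(-1, 1)` the map `straighten b` is a diffeomorphism onto `ℝ` if `b > 0` and onto `(-∞, 0)` if
`b = 0`, with an explicit inverse given by a root of a quadratic. In this coordinate the field
`a / (straighten b)'` is the constant field `a`, so its solutions are the translations
`t ↦ straighten b x + a t` read back through the inverse, defined as long as they stay in the range.
Take `b p ≥ 0` smooth with zero set exactly `C`, and `a p = cayley (l p) ≥ 0`. Over `p ∉ C` the
flow is complete; over `p ∈ C` the solution from `x` survives up to time `1` iff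
`cayley (l p) - cayley x < 0`, i.e. `x < l p`. The time-one map is translation by `a` in the
straightened coordinate, its inverse is the time `-1` map, and both are explicit formulas smooth
in `(p, x)`.
-/

open Set Topology Manifold
open scoped ContDiff

noncomputable section

namespace EpigraphFlow

variable {a b l r x y τ : ℝ}

def cayley (y : ℝ) : ℝ := (1 - y) / (1 + y)

lemma cayley_cayley (hy : y ≠ -1) : cayley (cayley y) = y := by
  have : 1 + y ≠ 0 := fun h => hy (by linarith)
  unfold cayley
  field_simp
  ring

lemma cayley_pos (hy : y ∈ Ioo (-1 : ℝ) 1) : 0 < cayley y :=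
  div_pos (by linarith [hy.2]) (by linarith [hy.1])

lemma cayley_nonneg (hy : y ∈ Ioc (-1 : ℝ) 1) : 0 ≤ cayley y :=
  div_nonneg (by linarith [hy.2]) (by linarith [hy.1])

lemma cayley_mem_Ioo (hr : 0 < r) : cayley r ∈ Ioo (-1 : ℝ) 1 := by
  unfold cayley
  constructor
  · rw [lt_div_iff₀ (by linarith)]; linarith
  · rw [div_lt_one (by linarith)]; linarith

lemma cayley_lt_cayley_iff (hx : -1 < x) (hy : -1 < y) : cayley x < cayley y ↔ y < x := by
  unfold cayley
  rw [div_lt_div_iff₀ (by linarith) (by linarith)]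
  constructor <;> intro h <;> nlinarith

lemma contDiffAt_cayley (hy : -1 < y) : ContDiffAt ℝ ∞ cayley y := by
  have : 1 + y ≠ 0 := by linarith
  unfold cayley
  fun_prop (disch := assumption)

def straighten (b y : ℝ) : ℝ := b / cayley y - cayley y

def straightenDeriv (b y : ℝ) : ℝ := 2 * b / (1 - y) ^ 2 + 2 / (1 + y) ^ 2

lemma hasDerivAt_straighten (hy : y ∈ Ioo (-1 : ℝ) 1) :
    HasDerivAt (straighten b) (straightenDeriv b y) y := by
  obtain ⟨hy₁, hy₂⟩ := hy
  have hp : 1 + y ≠ 0 := by linarith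
  have hm : 1 - y ≠ 0 := by linarith
  have hc : HasDerivAt cayley (-2 / (1 + y) ^ 2) y := by
    refine (((hasDerivAt_id' y).const_sub 1).div ((hasDerivAt_id' y).const_add 1) hp).congr_deriv ?_
    field_simp
    ring
  have hc₀ : cayley y ≠ 0 := (cayley_pos ⟨hy₁, hy₂⟩).ne'
  refine (((hasDerivAt_const y b).div hc hc₀).sub hc).congr_deriv ?_
  unfold straightenDeriv cayley
  field_simp
  ring

lemma straightenDeriv_pos (hb : 0 ≤ b) (hy : y ∈ Ioo (-1 : ℝ) 1) : 0 < straightenDeriv b y := by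
  have : 0 < 1 + y := by linarith [hy.1]
  unfold straightenDeriv
  positivity

lemma straighten_zero (y : ℝ) : straighten 0 y = -cayley y := by
  simp [straighten]

def straightenRange (b : ℝ) : Set ℝ := {τ | 0 < b ∨ τ < 0}

lemma mem_straightenRange_of_le (hτ : τ ∈ straightenRange b) (h : y ≤ τ) :
    y ∈ straightenRange b :=
  Or.imp_right h.trans_lt hτ

lemma straighten_mem_straightenRange (hb : 0 ≤ b) (hy : y ∈ Ioo (-1 : ℝ) 1) :
    straighten b y ∈ straightenRange b := by
  rcases hb.lt_or_eq with hb | rfl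
  · exact .inl hb
  · exact .inr (by simpa [straighten_zero] using cayley_pos hy)

lemma straighten_add_cayley_mem_straightenRange_iff (hb : 0 ≤ b) (hx : -1 < x) (hl : -1 < l) :
    straighten b x + cayley l ∈ straightenRange b ↔ (b = 0 → x < l) := by
  rcases hb.lt_or_eq with hb | rfl
  · simp [straightenRange, hb, hb.ne']
  · simp only [straightenRange, lt_self_iff_false, false_or, mem_ofPred_eq, forall_const,
      straighten_zero, neg_add_lt_iff_lt_add, add_zero, cayley_lt_cayley_iff hl hx]

/-- The nonnegative root `r` of `r ^ 2 + τ * r = b`; as `cayley` is an involution,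
`straighten b (cayley r) = b / r - r = τ`. -/
def straightenRoot (b τ : ℝ) : ℝ := (√(τ ^ 2 + 4 * b) - τ) / 2

def unstraighten (b τ : ℝ) : ℝ := cayley (straightenRoot b τ)

lemma straightenRoot_sq_add (hb : 0 ≤ b) :
    straightenRoot b τ ^ 2 + τ * straightenRoot b τ = b := by
  have := Real.sq_sqrt (by positivity : 0 ≤ τ ^ 2 + 4 * b)
  unfold straightenRoot
  linear_combination this / 4

lemma straightenRoot_nonneg (hb : 0 ≤ b) : 0 ≤ straightenRoot b τ := by
  have : τ ≤ √(τ ^ 2 + 4 * b) := Real.le_sqrt_of_sq_le (by linarith)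
  unfold straightenRoot
  linarith

lemma straightenRoot_pos (hb : 0 ≤ b) (hτ : τ ∈ straightenRange b) : 0 < straightenRoot b τ := by
  refine (straightenRoot_nonneg hb).lt_of_ne' fun h => ?_
  have := straightenRoot_sq_add (τ := τ) hb
  rw [h] at this
  rcases hτ with hτ | hτ
  · linarith
  · have : τ < √(τ ^ 2 + 4 * b) := hτ.trans_le (Real.sqrt_nonneg _)
    unfold straightenRoot at h
    linarith

lemma straightenRoot_eq (hb : 0 ≤ b) (hr : 0 < r) (h : r ^ 2 + τ * r = b) :
    straightenRoot b τ = r := by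
  have hτ : τ ∈ straightenRange b := by
    rcases hb.lt_or_eq with hb | rfl
    · exact .inl hb
    · exact .inr (by nlinarith)
  have hs := straightenRoot_sq_add (τ := τ) hb
  have hs₀ := straightenRoot_pos hb hτ
  have : (straightenRoot b τ - r) * (straightenRoot b τ * r + b) = 0 := by
    linear_combination r * hs - r * h - (straightenRoot b τ - r) * h
  rcases mul_eq_zero.1 this with h' | h'
  · linarith
  · nlinarith

lemma unstraighten_mem_Ioo (hb : 0 ≤ b) (hτ : τ ∈ straightenRange b) :
    unstraighten b τ ∈ Ioo (-1 : ℝ) 1 :=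
  cayley_mem_Ioo (straightenRoot_pos hb hτ)

lemma straighten_unstraighten (hb : 0 ≤ b) (hτ : τ ∈ straightenRange b) :
    straighten b (unstraighten b τ) = τ := by
  have hr := straightenRoot_pos hb hτ
  have hs := straightenRoot_sq_add (τ := τ) hb
  rw [straighten, unstraighten, cayley_cayley (by linarith)]
  generalize straightenRoot b τ = r at hr hs ⊢
  rw [← hs]
  field_simp
  ring

lemma unstraighten_straighten (hb : 0 ≤ b) (hy : y ∈ Ioo (-1 : ℝ) 1) :
    unstraighten b (straighten b y) = y := by
  have hc := cayley_pos hy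
  have hr : straightenRoot b (straighten b y) = cayley y := by
    refine straightenRoot_eq hb hc ?_
    unfold straighten
    field_simp
    ring
  rw [unstraighten, hr, cayley_cayley (by linarith [hy.1])]

lemma contDiffAt_unstraighten {p : ℝ × ℝ} (hb : 0 ≤ p.1) (hτ : p.2 ∈ straightenRange p.1) :
    ContDiffAt ℝ ∞ (fun p : ℝ × ℝ => unstraighten p.1 p.2) p := by
  have hrad : p.2 ^ 2 + 4 * p.1 ≠ 0 := by
    rcases hτ with h | h <;> nlinarith [sq_nonneg p.2]
  have hr : 1 + straightenRoot p.1 p.2 ≠ 0 := by linarith [straightenRoot_pos hb hτ]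
  unfold unstraighten cayley straightenRoot at *
  fun_prop (disch := assumption)

lemma hasDerivAt_unstraighten (hb : 0 ≤ b) (hτ : τ ∈ straightenRange b) :
    HasDerivAt (unstraighten b) (straightenDeriv b (unstraighten b τ))⁻¹ τ := by
  have hy := unstraighten_mem_Ioo hb hτ
  have hcont : ContinuousAt (unstraighten b) τ :=
    (contDiffAt_unstraighten (p := (b, τ)) hb hτ).continuousAt.comp
      (continuous_const.prodMk continuous_id).continuousAt
  have hinv : ∀ᶠ τ' in 𝓝 τ, straighten b (unstraighten b τ') = τ' := by
    rcases hτ with h | h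
    · exact .of_forall fun τ' => straighten_unstraighten hb (.inl h)
    · filter_upwards [eventually_lt_nhds h] with τ' h' using straighten_unstraighten hb (.inr h')
  exact (hasDerivAt_straighten hy).of_local_left_inverse hcont (straightenDeriv_pos hb hy).ne' hinv

def velocity (a b y : ℝ) : ℝ := a / straightenDeriv b y

def flow (a b x t : ℝ) : ℝ := unstraighten b (straighten b x + a * t)

def SolvesOn (V : ℝ → ℝ) (γ : ℝ → ℝ) (s : Set ℝ) : Prop :=
  ∀ t ∈ s, γ t ∈ Ioo (-1 : ℝ) 1 ∧ HasDerivAt γ (V (γ t)) t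

lemma contDiffAt_velocity {p : ℝ × ℝ × ℝ} (hb : 0 ≤ p.2.1) (hy : p.2.2 ∈ Ioo (-1 : ℝ) 1) :
    ContDiffAt ℝ ∞ (fun p : ℝ × ℝ × ℝ => velocity p.1 p.2.1 p.2.2) p := by
  have hd := (straightenDeriv_pos hb hy).ne'
  have hm : 1 - p.2.2 ≠ 0 := by linarith [hy.2]
  have hp : 1 + p.2.2 ≠ 0 := by linarith [hy.1]
  unfold velocity straightenDeriv at *
  fun_prop (disch := first | assumption | exact pow_ne_zero _ ‹_›)

lemma contDiffAt_flow (t : ℝ) {p : ℝ × ℝ × ℝ} (hb : 0 ≤ p.2.1) (hx : p.2.2 ∈ Ioo (-1 : ℝ) 1)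
    (hτ : straighten p.2.1 p.2.2 + p.1 * t ∈ straightenRange p.2.1) :
    ContDiffAt ℝ ∞ (fun p : ℝ × ℝ × ℝ => flow p.1 p.2.1 p.2.2 t) p := by
  have hc := (cayley_pos hx).ne'
  have hp : 1 + p.2.2 ≠ 0 := by linarith [hx.1]
  have hτ' : ContDiffAt ℝ ∞
      (fun p : ℝ × ℝ × ℝ => (p.2.1, straighten p.2.1 p.2.2 + p.1 * t)) p := by
    unfold straighten cayley at hc ⊢
    fun_prop (disch := assumption)
  have hu := contDiffAt_unstraighten (p := (p.2.1, straighten p.2.1 p.2.2 + p.1 * t)) hb hτ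
  exact (hu.comp p hτ' :)

lemma flow_zero (hb : 0 ≤ b) (hx : x ∈ Ioo (-1 : ℝ) 1) : flow a b x 0 = x := by
  simp [flow, unstraighten_straighten hb hx]

lemma straighten_flow {t : ℝ} (hb : 0 ≤ b) (ht : straighten b x + a * t ∈ straightenRange b) :
    straighten b (flow a b x t) = straighten b x + a * t :=
  straighten_unstraighten hb ht

lemma flow_flow {s t : ℝ} (hb : 0 ≤ b) (ht : straighten b x + a * t ∈ straightenRange b) :
    flow a b (flow a b x t) s = flow a b x (t + s) := by
  rw [flow, straighten_flow hb ht, flow, mul_add, add_assoc]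

lemma solvesOn_flow {s : Set ℝ} (hb : 0 ≤ b)
    (hs : ∀ t ∈ s, straighten b x + a * t ∈ straightenRange b) :
    SolvesOn (velocity a b) (flow a b x) s := by
  intro t ht
  refine ⟨unstraighten_mem_Ioo hb (hs t ht), ?_⟩
  have hlin : HasDerivAt (fun t => straighten b x + a * t) a t := by
    simpa using ((hasDerivAt_id t).const_mul a).const_add (straighten b x)
  rw [velocity, div_eq_inv_mul]
  exact (hasDerivAt_unstraighten hb (hs t ht)).comp t hlin

lemma solvesOn_flow_Icc (ha : 0 ≤ a) (hb : 0 ≤ b) (h : straighten b x + a ∈ straightenRange b) :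
    SolvesOn (velocity a b) (flow a b x) (Icc 0 1) :=
  solvesOn_flow hb fun _ ht => mem_straightenRange_of_le h (by nlinarith [ht.2])

lemma straighten_add_mul_mem_straightenRange_of_nonpos {t : ℝ} (ha : 0 ≤ a) (hb : 0 ≤ b)
    (hx : x ∈ Ioo (-1 : ℝ) 1) (ht : t ≤ 0) : straighten b x + a * t ∈ straightenRange b :=
  mem_straightenRange_of_le (straighten_mem_straightenRange hb hx) (by nlinarith)

lemma straighten_solution_one {γ : ℝ → ℝ} (hb : 0 ≤ b)
    (hγ : SolvesOn (velocity a b) γ (Icc 0 1)) : straighten b (γ 1) = straighten b (γ 0) + a := by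
  have hF : ∀ t ∈ Icc (0 : ℝ) 1, HasDerivAt (fun t => straighten b (γ t) - a * t) 0 t := by
    intro t ht
    obtain ⟨hy, hγ'⟩ := hγ t ht
    refine (((hasDerivAt_straighten (b := b) hy).comp t hγ').sub
      ((hasDerivAt_id t).const_mul a)).congr_deriv ?_
    rw [velocity, mul_div_cancel₀ _ (straightenDeriv_pos hb hy).ne']
    simp
  have := constant_of_has_deriv_right_zero (fun t ht => (hF t ht).continuousAt.continuousWithinAt)
    (fun t ht => (hF t (Ico_subset_Icc_self ht)).hasDerivWithinAt) 1 ⟨zero_le_one, le_rfl⟩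
  simp only [mul_one, mul_zero, sub_zero] at this
  linarith

lemma exists_solvesOn_Icc_iff (ha : 0 ≤ a) (hb : 0 ≤ b) (hx : x ∈ Ioo (-1 : ℝ) 1) :
    (∃ γ : ℝ → ℝ, γ 0 = x ∧ SolvesOn (velocity a b) γ (Icc 0 1)) ↔
      straighten b x + a ∈ straightenRange b := by
  refine ⟨fun ⟨γ, hγ₀, hγ⟩ => ?_, fun h => ⟨flow a b x, flow_zero hb hx, solvesOn_flow_Icc ha hb h⟩⟩
  rw [← hγ₀, ← straighten_solution_one hb hγ]
  exact straighten_mem_straightenRange hb (hγ 1 ⟨zero_le_one, le_rfl⟩).1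

section Manifold

variable {M : Type*} {a b : M → ℝ}

def timeMap (a b : M → ℝ) (t : ℝ) (q : M × ℝ) : M × ℝ := (q.1, flow (a q.1) (b q.1) q.2 t)

def timeOneDomain (a b : M → ℝ) : Set (M × ℝ) :=
  {q | q.2 ∈ Ioo (-1 : ℝ) 1 ∧ straighten (b q.1) q.2 + a q.1 ∈ straightenRange (b q.1)}

lemma mapsTo_timeMap_one (hb : ∀ p, 0 ≤ b p) :
    MapsTo (timeMap a b 1) (timeOneDomain a b) (univ ×ˢ Ioo (-1 : ℝ) 1) :=
  fun q hq => ⟨trivial, unstraighten_mem_Ioo (hb _) (by simpa using hq.2)⟩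

lemma mapsTo_timeMap_neg_one (ha : ∀ p, 0 ≤ a p) (hb : ∀ p, 0 ≤ b p) :
    MapsTo (timeMap a b (-1)) (univ ×ˢ Ioo (-1 : ℝ) 1) (timeOneDomain a b) := by
  rintro ⟨p, x⟩ ⟨-, hx⟩
  have h := straighten_add_mul_mem_straightenRange_of_nonpos (ha p) (hb p) hx (t := -1)
    (by norm_num)
  refine ⟨unstraighten_mem_Ioo (hb p) h, ?_⟩
  simpa [timeMap, straighten_flow (hb p) h] using straighten_mem_straightenRange (hb p) hx

lemma invOn_timeMap (ha : ∀ p, 0 ≤ a p) (hb : ∀ p, 0 ≤ b p) :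
    InvOn (timeMap a b (-1)) (timeMap a b 1) (timeOneDomain a b) (univ ×ˢ Ioo (-1 : ℝ) 1) := by
  constructor
  · rintro ⟨p, x⟩ ⟨hx, h⟩
    simp only [timeMap]
    rw [flow_flow (hb p) (by simpa using h), add_neg_cancel, flow_zero (hb p) hx]
  · rintro ⟨p, x⟩ ⟨-, hx⟩
    have h := straighten_add_mul_mem_straightenRange_of_nonpos (ha p) (hb p) hx (t := -1)
      (by norm_num)
    simp only [timeMap]
    rw [flow_flow (hb p) h, neg_add_cancel, flow_zero (hb p) hx]

lemma notMem_epigraph_iff {C : Set M} {l : M → ℝ} (hl : ∀ p, -1 < l p) (hb : ∀ p, 0 ≤ b p)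
    (hbC : ∀ p, b p = 0 ↔ p ∈ C) {q : M × ℝ} (hq : q ∈ univ ×ˢ Ioo (-1 : ℝ) 1) :
    q ∉ {q ∈ univ ×ˢ Ioo (-1 : ℝ) 1 | q.1 ∈ C ∧ l q.1 ≤ q.2} ↔
      straighten (b q.1) q.2 + cayley (l q.1) ∈ straightenRange (b q.1) := by
  obtain ⟨p, x⟩ := q
  obtain ⟨-, hx : x ∈ Ioo (-1 : ℝ) 1⟩ := hq
  rw [straighten_add_cayley_mem_straightenRange_iff (hb p) hx.1 (hl p), hbC]
  simp [hx.1, hx.2]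

lemma diff_epigraph_eq_timeOneDomain {C : Set M} {l : M → ℝ} (hl : ∀ p, -1 < l p)
    (hb : ∀ p, 0 ≤ b p) (hbC : ∀ p, b p = 0 ↔ p ∈ C) :
    univ ×ˢ Ioo (-1 : ℝ) 1 \ {q ∈ univ ×ˢ Ioo (-1 : ℝ) 1 | q.1 ∈ C ∧ l q.1 ≤ q.2} =
      timeOneDomain (fun p => cayley (l p)) b := by
  ext q
  exact ⟨fun h => ⟨h.1.2, (notMem_epigraph_iff hl hb hbC h.1).1 h.2⟩,
    fun h => ⟨⟨trivial, h.1⟩, (notMem_epigraph_iff hl hb hbC ⟨trivial, h.1⟩).2 h.2⟩⟩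

variable {E : Type*} [NormedAddCommGroup E] [NormedSpace ℝ E] {H : Type*} [TopologicalSpace H]
  {I : ModelWithCorners ℝ E H} [TopologicalSpace M] [ChartedSpace H M]

lemma contMDiffAt_comp_param (ha : ContMDiff I 𝓘(ℝ, ℝ) ∞ a) (hb : ContMDiff I 𝓘(ℝ, ℝ) ∞ b)
    {Φ : ℝ × ℝ × ℝ → ℝ} {q : M × ℝ} (hΦ : ContDiffAt ℝ ∞ Φ (a q.1, b q.1, q.2)) :
    ContMDiffAt (I.prod 𝓘(ℝ, ℝ)) 𝓘(ℝ, ℝ) ∞ (fun q : M × ℝ => Φ (a q.1, b q.1, q.2)) q := by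
  have hbx : ContMDiff (I.prod 𝓘(ℝ, ℝ)) 𝓘(ℝ, ℝ × ℝ) ∞ fun q : M × ℝ => (b q.1, q.2) :=
    (hb.comp contMDiff_fst).prodMk_space contMDiff_snd
  exact ContDiffAt.comp_contMDiffAt (f := fun q : M × ℝ => (a q.1, b q.1, q.2)) hΦ
    (((ha.comp contMDiff_fst).prodMk_space hbx) q)

lemma contMDiffAt_timeMap (ha : ContMDiff I 𝓘(ℝ, ℝ) ∞ a) (hb : ContMDiff I 𝓘(ℝ, ℝ) ∞ b)
    (t : ℝ) {q : M × ℝ} (hb₀ : 0 ≤ b q.1) (hx : q.2 ∈ Ioo (-1 : ℝ) 1)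
    (h : straighten (b q.1) q.2 + a q.1 * t ∈ straightenRange (b q.1)) :
    ContMDiffAt (I.prod 𝓘(ℝ, ℝ)) (I.prod 𝓘(ℝ, ℝ)) ∞ (timeMap a b t) q :=
  contMDiffAt_fst.prodMk (contMDiffAt_comp_param ha hb (contDiffAt_flow t hb₀ hx h))

end Manifold

end EpigraphFlow

open EpigraphFlow

theorem time_one_flow_excises_epigraph_general
    {E : Type*} [NormedAddCommGroup E] [NormedSpace ℝ E] [FiniteDimensional ℝ E]
    {H : Type*} [TopologicalSpace H] (I : ModelWithCorners ℝ E H)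
    {B : Type*} [TopologicalSpace B] [ChartedSpace H B]
    [IsManifold I (⊤ : ℕ∞) B] [T2Space B] [SecondCountableTopology B]
    (C : Set B) (hC : IsClosed C)
    (l : B → ℝ) (hl : ContMDiff I 𝓘(ℝ, ℝ) (⊤ : ℕ∞) l)
    (hl_range : ∀ p, l p ∈ Ioc (-1 : ℝ) 1)
    (D : Set (B × ℝ)) (hD : D = univ ×ˢ Ioo (-1 : ℝ) 1)
    (Z : Set (B × ℝ)) (hZ : Z = {q ∈ D | q.1 ∈ C ∧ l q.1 ≤ q.2}) :
    ∃ v : B × ℝ → ℝ,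
      ContMDiffOn (I.prod 𝓘(ℝ, ℝ)) 𝓘(ℝ, ℝ) (⊤ : ℕ∞) v D ∧
      (∀ q ∈ D, 0 ≤ v q) ∧
      -- (i) defined at least on [0,1] iff not in Z; defined on (-∞, 0] everywhere
      (∀ q ∈ D,
        ((∃ γ : ℝ → ℝ, γ 0 = q.2 ∧
            ∀ t ∈ Icc (0:ℝ) 1, γ t ∈ Ioo (-1 : ℝ) 1 ∧ HasDerivAt γ (v (q.1, γ t)) t)
          ↔ q ∉ Z)) ∧
      (∀ q ∈ D, ∀ T : ℝ, 0 < T →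
        ∃ γ : ℝ → ℝ, γ 0 = q.2 ∧
          ∀ t ∈ Icc (-T) 0, γ t ∈ Ioo (-1 : ℝ) 1 ∧ HasDerivAt γ (v (q.1, γ t)) t) ∧
      -- (ii) the time-1 flow map Ψ(p,x) = (p, γ_{p,x}(1)) is a diffeomorphism
      --      from D ∖ Z onto D, preserving the B-coordinate
      ∃ g : B × ℝ → ℝ,
        (∀ q ∈ D \ Z, ∃ γ : ℝ → ℝ, γ 0 = q.2 ∧
          (∀ t ∈ Icc (0:ℝ) 1, γ t ∈ Ioo (-1 : ℝ) 1 ∧ HasDerivAt γ (v (q.1, γ t)) t) ∧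
          γ 1 = g q) ∧
        ContMDiffOn (I.prod 𝓘(ℝ, ℝ)) (I.prod 𝓘(ℝ, ℝ)) (⊤ : ℕ∞)
          (fun q : B × ℝ => (q.1, g q)) (D \ Z) ∧
        BijOn (fun q : B × ℝ => (q.1, g q)) (D \ Z) D ∧
        (∃ Ψ' : B × ℝ → B × ℝ,
          ContMDiffOn (I.prod 𝓘(ℝ, ℝ)) (I.prod 𝓘(ℝ, ℝ)) (⊤ : ℕ∞) Ψ' D ∧
          InvOn Ψ' (fun q : B × ℝ => (q.1, g q)) (D \ Z) D) := by
  subst hD hZ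
  have : LocallyCompactSpace B := Manifold.locallyCompact_of_finiteDimensional I
  obtain ⟨b, hb_supp, hb, hb₀⟩ := hC.isOpen_compl.exists_contMDiff_support_eq I (n := (⊤ : ℕ∞))
  have hbC : ∀ p, b p = 0 ↔ p ∈ C := fun p => by
    rw [← Function.notMem_support, hb_supp, notMem_compl_iff]
  have hl₁ : ∀ p, -1 < l p := fun p => (hl_range p).1
  set a : B → ℝ := fun p => cayley (l p)
  have ha₀ : ∀ p, 0 ≤ a p := fun p => cayley_nonneg (hl_range p)
  have ha : ContMDiff I 𝓘(ℝ, ℝ) ∞ a := fun p =>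
    (contDiffAt_cayley (hl₁ p)).comp_contMDiffAt (hl p)
  rw [diff_epigraph_eq_timeOneDomain hl₁ hb₀ hbC]
  refine ⟨fun q => velocity (a q.1) (b q.1) q.2, fun q hq => ?_, fun q hq => ?_,
    fun q hq => (exists_solvesOn_Icc_iff (ha₀ _) (hb₀ _) hq.2).trans
      (notMem_epigraph_iff hl₁ hb₀ hbC hq).symm,
    fun q hq T _ => ?_, fun q => flow (a q.1) (b q.1) q.2 1,
    fun q hq => ⟨_, flow_zero (hb₀ _) hq.1, solvesOn_flow_Icc (ha₀ _) (hb₀ _) hq.2, rfl⟩,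
    fun q hq => ?_,
    (invOn_timeMap ha₀ hb₀).bijOn (mapsTo_timeMap_one hb₀) (mapsTo_timeMap_neg_one ha₀ hb₀),
    timeMap a b (-1), fun q hq => ?_, invOn_timeMap ha₀ hb₀⟩
  · exact (contMDiffAt_comp_param ha hb (contDiffAt_velocity (hb₀ _) hq.2)).contMDiffWithinAt
  · exact div_nonneg (ha₀ _) (straightenDeriv_pos (hb₀ _) hq.2).le
  · exact ⟨_, flow_zero (hb₀ _) hq.2, solvesOn_flow (hb₀ _) fun t ht =>
      straighten_add_mul_mem_straightenRange_of_nonpos (ha₀ _) (hb₀ _) hq.2 ht.2⟩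
  · exact (contMDiffAt_timeMap ha hb 1 (hb₀ _) hq.1 (by simpa using hq.2)).contMDiffWithinAt
  · exact (contMDiffAt_timeMap ha hb (-1) (hb₀ _) hq.2
      (straighten_add_mul_mem_straightenRange_of_nonpos (ha₀ _) (hb₀ _) hq.2
        (by norm_num))).contMDiffWithinAt

/-- Let `B` be a smooth manifold, `C ⊆ B` closed, `l : B → ℝ` smooth with values in
`(-1,1]`, and `Z = {(p,x) : p ∈ C, x ≥ l p}` the epigraph of `l` over `C` inside
`B × (-1,1)`.  Then there is a smooth `v : B × (-1,1) → [0,∞)` such that the maximal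
solutions of `γ' = v(p,γ)` valued in `(-1,1)` are defined at least on `[0,1]` exactly
when the starting point is not in `Z`, are defined on `(-∞,0]` everywhere, and the
time-1 flow map `Ψ(p,x) = (p, γ_{p,x}(1))` is a diffeomorphism from
`(B × (-1,1)) ∖ Z` onto `B × (-1,1)` preserving the `B`-coordinate. -/
theorem time_one_flow_excises_epigraph
    {E : Type*} [NormedAddCommGroup E] [NormedSpace ℝ E] [FiniteDimensional ℝ E]
    {H : Type*} [TopologicalSpace H] (I : ModelWithCorners ℝ E H) [I.Boundaryless]
    {B : Type*} [TopologicalSpace B] [ChartedSpace H B]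
    [IsManifold I (⊤ : ℕ∞) B] [T2Space B] [SecondCountableTopology B]
    (C : Set B) (hC : IsClosed C)
    (l : B → ℝ) (hl : ContMDiff I 𝓘(ℝ, ℝ) (⊤ : ℕ∞) l)
    (hl_range : ∀ p, l p ∈ Ioc (-1 : ℝ) 1)
    (D : Set (B × ℝ)) (hD : D = univ ×ˢ Ioo (-1 : ℝ) 1)
    (Z : Set (B × ℝ)) (hZ : Z = {q ∈ D | q.1 ∈ C ∧ l q.1 ≤ q.2}) :
    ∃ v : B × ℝ → ℝ,
      ContMDiffOn (I.prod 𝓘(ℝ, ℝ)) 𝓘(ℝ, ℝ) (⊤ : ℕ∞) v D ∧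
      (∀ q ∈ D, 0 ≤ v q) ∧
      -- (i) defined at least on [0,1] iff not in Z; defined on (-∞, 0] everywhere
      (∀ q ∈ D,
        ((∃ γ : ℝ → ℝ, γ 0 = q.2 ∧
            ∀ t ∈ Icc (0:ℝ) 1, γ t ∈ Ioo (-1 : ℝ) 1 ∧ HasDerivAt γ (v (q.1, γ t)) t)
          ↔ q ∉ Z)) ∧
      (∀ q ∈ D, ∀ T : ℝ, 0 < T →
        ∃ γ : ℝ → ℝ, γ 0 = q.2 ∧
          ∀ t ∈ Icc (-T) 0, γ t ∈ Ioo (-1 : ℝ) 1 ∧ HasDerivAt γ (v (q.1, γ t)) t) ∧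
      -- (ii) the time-1 flow map Ψ(p,x) = (p, γ_{p,x}(1)) is a diffeomorphism
      --      from D ∖ Z onto D, preserving the B-coordinate
      ∃ g : B × ℝ → ℝ,
        (∀ q ∈ D \ Z, ∃ γ : ℝ → ℝ, γ 0 = q.2 ∧
          (∀ t ∈ Icc (0:ℝ) 1, γ t ∈ Ioo (-1 : ℝ) 1 ∧ HasDerivAt γ (v (q.1, γ t)) t) ∧
          γ 1 = g q) ∧
        ContMDiffOn (I.prod 𝓘(ℝ, ℝ)) (I.prod 𝓘(ℝ, ℝ)) (⊤ : ℕ∞)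
          (fun q : B × ℝ => (q.1, g q)) (D \ Z) ∧
        BijOn (fun q : B × ℝ => (q.1, g q)) (D \ Z) D ∧
        (∃ Ψ' : B × ℝ → B × ℝ,
          ContMDiffOn (I.prod 𝓘(ℝ, ℝ)) (I.prod 𝓘(ℝ, ℝ)) (⊤ : ℕ∞) Ψ' D ∧
          InvOn Ψ' (fun q : B × ℝ => (q.1, g q)) (D \ Z) D) :=
  time_one_flow_excises_epigraph_general I C hC l hl hl_range D hD Z hZ
end
end

section
/- Let B be a smooth manifold and let λ : B → ℝ be a lower semi-continuous function with 0 < λ(y) ≤ 1 for all y ∈ B. Then there exists a sequence of smooth functions λ_n : B → ℝ (n ∈ ℕ) such that 0 < λ_n(y) < λ_{n+1}(y) < λ(y) for all n and all y ∈ B, and sup_{n} λ_n(y) = λ(y) for every y ∈ B. -/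
/-!
Baire's argument: for a metric `ρ` inducing the topology, the inf-convolutions
`l_k y = ⨅ z, l z + k * ρ y z` are `k`-Lipschitz, increase with `k`, and by lower semicontinuity of
`l > 0` they are positive and converge to `l` as `k → ∞`. Multiplying `l_{n+1}` by a strictly
increasing sequence in `(0, 1)` tending to `1` gives continuous `d n` with
`0 < d n < d (n + 1) < l` and `d n → l`. On a manifold, a smooth partition of unity produces a smooth
function strictly between `d (2 n)` and `d (2 n + 1)`, and these functions are the required sequence.
-/

open Set Manifold Filter Topology Metric
open scoped NNReal ContDiff

noncomputable section

section InfConvDist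

variable {X : Type*} [PseudoMetricSpace X] {l : X → ℝ}

/-- The Pasch–Hausdorff envelope of `l`. -/
def infConvDist (l : X → ℝ) (k : ℝ≥0) (y : X) : ℝ :=
  ⨅ z, l z + k * dist y z

theorem bddBelow_range_add_mul_dist (hl : BddBelow (range l)) (k : ℝ≥0) (y : X) :
    BddBelow (range fun z => l z + k * dist y z) := by
  obtain ⟨m, hm⟩ := hl
  refine ⟨m, forall_mem_range.2 fun z => ?_⟩
  have hmz : m ≤ l z := hm (mem_range_self z)
  have : 0 ≤ (k : ℝ) * dist y z := by positivity
  linarith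

theorem infConvDist_le_add (hl : BddBelow (range l)) (k : ℝ≥0) (y z : X) :
    infConvDist l k y ≤ l z + k * dist y z :=
  ciInf_le (bddBelow_range_add_mul_dist hl k y) z

theorem infConvDist_le_self (hl : BddBelow (range l)) (k : ℝ≥0) (y : X) :
    infConvDist l k y ≤ l y := by
  simpa using infConvDist_le_add hl k y y

theorem monotone_infConvDist (hl : BddBelow (range l)) (y : X) :
    Monotone fun k => infConvDist l k y := fun k k' hkk' =>
  have : Nonempty X := ⟨y⟩
  le_ciInf fun z => (infConvDist_le_add hl k y z).trans (by gcongr)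

theorem lipschitzWith_infConvDist (hl : BddBelow (range l)) (k : ℝ≥0) :
    LipschitzWith k (infConvDist l k) := by
  refine LipschitzWith.of_le_add_mul k fun x y => ?_
  rw [← sub_le_iff_le_add]
  have : Nonempty X := ⟨x⟩
  refine le_ciInf fun z => ?_
  calc infConvDist l k x - k * dist x y ≤ l z + k * dist x z - k * dist x y := by
        gcongr; exact infConvDist_le_add hl k x z
    _ ≤ l z + k * (dist x y + dist y z) - k * dist x y := by gcongr; exact dist_triangle x y z
    _ = l z + k * dist y z := by ring

theorem min_le_infConvDist {m a δ : ℝ} (hm : ∀ z, m ≤ l z) {y : X}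
    (hball : ∀ z ∈ ball y δ, a ≤ l z) (k : ℝ≥0) :
    min a (m + k * δ) ≤ infConvDist l k y := by
  have : Nonempty X := ⟨y⟩
  refine le_ciInf fun z => ?_
  rcases lt_or_ge (dist z y) δ with hz | hz
  · have : 0 ≤ (k : ℝ) * dist y z := by positivity
    linarith [min_le_left a (m + k * δ), hball z hz]
  · calc min a (m + k * δ) ≤ m + k * δ := min_le_right _ _
      _ ≤ l z + k * dist y z := by rw [dist_comm]; gcongr; exact hm z

theorem infConvDist_pos (hl : LowerSemicontinuous l) (hpos : ∀ z, 0 < l z) {k : ℝ≥0}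
    (hk : 0 < k) (y : X) : 0 < infConvDist l k y := by
  obtain ⟨δ, hδ, hball⟩ := Metric.eventually_nhds_iff.1 (hl y _ (half_lt_self (hpos y)))
  refine lt_of_lt_of_le ?_ (min_le_infConvDist (fun z => (hpos z).le)
    (fun z hz => (hball hz).le) k)
  exact lt_min (half_pos (hpos y)) (by positivity)

theorem tendsto_infConvDist (hl : LowerSemicontinuous l) (hbdd : BddBelow (range l)) (y : X) :
    Tendsto (fun k => infConvDist l k y) atTop (𝓝 (l y)) := by
  obtain ⟨m, hm⟩ := hbdd
  refine tendsto_order.2 ⟨fun a ha => ?_, fun a ha =>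
    Eventually.of_forall fun k => (infConvDist_le_self ⟨m, hm⟩ k y).trans_lt ha⟩
  obtain ⟨δ, hδ, hball⟩ := Metric.eventually_nhds_iff.1 (hl y _ (add_div_two_lt_right.2 ha))
  have hfar : Tendsto (fun k : ℝ≥0 => m + k * δ) atTop atTop :=
    tendsto_atTop_add_const_left _ m
      ((NNReal.tendsto_coe_atTop.2 tendsto_id).atTop_mul_const hδ)
  filter_upwards [hfar.eventually_gt_atTop a] with k hk
  refine lt_of_lt_of_le (lt_min (left_lt_add_div_two.2 ha) hk)
    (min_le_infConvDist (fun z => hm (mem_range_self z)) (fun z hz => (hball hz).le) k)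

end InfConvDist

theorem LowerSemicontinuous.exists_continuous_strictMono_tendsto {X : Type*}
    [PseudoMetricSpace X] {l : X → ℝ} (hl : LowerSemicontinuous l) (hpos : ∀ z, 0 < l z) :
    ∃ d : ℕ → X → ℝ, (∀ n, Continuous (d n)) ∧ (∀ n y, 0 < d n y) ∧
      (∀ n y, d n y < d (n + 1) y) ∧ (∀ n y, d n y < l y) ∧
      ∀ y, Tendsto (fun n => d n y) atTop (𝓝 (l y)) := by
  have hbdd : BddBelow (range l) := ⟨0, forall_mem_range.2 fun z => (hpos z).le⟩
  obtain ⟨u, hu_mono, hu_mem, hu_lim⟩ := exists_seq_strictMono_tendsto' (zero_lt_one' ℝ)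
  set c : ℕ → X → ℝ := fun n => infConvDist l (n + 1)
  have hc_pos n y : 0 < c n y := infConvDist_pos hl hpos n.cast_add_one_pos y
  refine ⟨fun n y => u n * c n y, fun n => ?_, fun n y => mul_pos (hu_mem n).1 (hc_pos n y),
    fun n y => ?_, fun n y => ?_, fun y => ?_⟩
  · exact continuous_const.mul (lipschitzWith_infConvDist hbdd _).continuous
  · calc u n * c n y < u (n + 1) * c n y := 
          mul_lt_mul_of_pos_right (hu_mono n.lt_succ_self) (hc_pos n y)
      _ ≤ u (n + 1) * c (n + 1) y := by
        gcongr
        · exact (hu_mem _).1.le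
        · exact monotone_infConvDist hbdd y (by norm_num)
  · exact (mul_lt_of_lt_one_left (hc_pos n y) (hu_mem n).2).trans_le (infConvDist_le_self hbdd _ y)
  · have hk : Tendsto (fun n : ℕ => ((n + 1 : ℕ) : ℝ≥0)) atTop atTop :=
      tendsto_natCast_atTop_atTop.comp (tendsto_add_atTop_nat 1)
    simpa using hu_lim.mul ((tendsto_infConvDist hl hbdd y).comp hk)

theorem exists_contMDiff_forall_mem_Ioo {E : Type*} [NormedAddCommGroup E] [NormedSpace ℝ E]
    [FiniteDimensional ℝ E] {H : Type*} [TopologicalSpace H] (I : ModelWithCorners ℝ E H)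
    {M : Type*} [TopologicalSpace M] [ChartedSpace H M] [IsManifold I ∞ M] [T2Space M]
    [SigmaCompactSpace M] {n : ℕ∞} {g h : M → ℝ} (hg : UpperSemicontinuous g)
    (hh : LowerSemicontinuous h) (hgh : ∀ x, g x < h x) :
    ∃ f : M → ℝ, ContMDiff I 𝓘(ℝ, ℝ) n f ∧ ∀ x, f x ∈ Ioo (g x) (h x) := by
  obtain ⟨f, hf⟩ := exists_contMDiffMap_forall_mem_convex_of_local_const I (n := n)
    (fun x => convex_Ioo (g x) (h x)) fun x =>
      ⟨(g x + h x) / 2, (hg x _ (left_lt_add_div_two.2 (hgh x))).and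
        (hh x _ (add_div_two_lt_right.2 (hgh x)))⟩
  exact ⟨f, f.contMDiff, hf⟩

theorem lsc_is_sup_of_increasing_smooth_general
    {E : Type*} [NormedAddCommGroup E] [NormedSpace ℝ E] [FiniteDimensional ℝ E]
    {H : Type*} [TopologicalSpace H] (I : ModelWithCorners ℝ E H)
    {B : Type*} [TopologicalSpace B] [ChartedSpace H B]
    [IsManifold I (⊤ : ℕ∞) B] [T2Space B] [SecondCountableTopology B]
    (l : B → ℝ) (hl : LowerSemicontinuous l) (hl_range : ∀ y, l y ∈ Ioc (0 : ℝ) 1) :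
    ∃ f : ℕ → B → ℝ,
      (∀ n, ContMDiff I 𝓘(ℝ, ℝ) (⊤ : ℕ∞) (f n)) ∧
      (∀ n y, 0 < f n y) ∧
      (∀ n y, f n y < f (n + 1) y) ∧
      (∀ n y, f n y < l y) ∧
      (∀ y, (⨆ n, f n y) = l y) := by
  have := I.locallyCompactSpace
  have := ChartedSpace.locallyCompactSpace H B
  have := Manifold.metrizableSpace I B
  let _ : MetricSpace B := TopologicalSpace.metrizableSpaceMetric B
  obtain ⟨d, hd_cont, hd_pos, hd_succ, hd_lt, hd_lim⟩ :=
    hl.exists_continuous_strictMono_tendsto fun y => (hl_range y).1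
  choose f hf_smooth hf_mem using fun n => exists_contMDiff_forall_mem_Ioo I (n := ⊤)
    (hd_cont (2 * n)).upperSemicontinuous (hd_cont (2 * n + 1)).lowerSemicontinuous
    fun y => hd_succ (2 * n) y
  have hf_succ n y : f n y < f (n + 1) y :=
    calc f n y < d (2 * n + 1) y := (hf_mem n y).2
      _ < d (2 * (n + 1)) y := hd_succ _ y
      _ < f (n + 1) y := (hf_mem (n + 1) y).1
  refine ⟨f, hf_smooth, fun n y => (hd_pos _ y).trans (hf_mem n y).1, hf_succ,
    fun n y => (hf_mem n y).2.trans (hd_lt _ y), fun y => ?_⟩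
  have h_even : StrictMono fun n : ℕ => 2 * n := fun a b (h : a < b) => show 2 * a < 2 * b by omega
  have h_odd : StrictMono fun n : ℕ => 2 * n + 1 :=
    fun a b (h : a < b) => show 2 * a + 1 < 2 * b + 1 by omega
  have hf_lim : Tendsto (fun n => f n y) atTop (𝓝 (l y)) :=
    tendsto_of_tendsto_of_tendsto_of_le_of_le
      ((hd_lim y).comp h_even.tendsto_atTop) ((hd_lim y).comp h_odd.tendsto_atTop)
      (fun n => (hf_mem n y).1.le) fun n => (hf_mem n y).2.le
  exact (isLUB_of_tendsto_atTop (monotone_nat_of_le_succ fun n => (hf_succ n y).le)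
    hf_lim).ciSup_eq

/-- Smooth version of a theorem of Baire: any lower semi-continuous `l : B → (0,1]`
on a smooth manifold `B` is the supremum of a strictly increasing sequence of positive
smooth functions `f n` with `f n < l` pointwise. -/
theorem lsc_is_sup_of_increasing_smooth
    {E : Type*} [NormedAddCommGroup E] [NormedSpace ℝ E] [FiniteDimensional ℝ E]
    {H : Type*} [TopologicalSpace H] (I : ModelWithCorners ℝ E H) [I.Boundaryless]
    {B : Type*} [TopologicalSpace B] [ChartedSpace H B]
    [IsManifold I (⊤ : ℕ∞) B] [T2Space B] [SecondCountableTopology B]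
    (l : B → ℝ) (hl : LowerSemicontinuous l) (hl_range : ∀ y, l y ∈ Ioc (0 : ℝ) 1) :
    ∃ f : ℕ → B → ℝ,
      (∀ n, ContMDiff I 𝓘(ℝ, ℝ) (⊤ : ℕ∞) (f n)) ∧
      (∀ n y, 0 < f n y) ∧
      (∀ n y, f n y < f (n + 1) y) ∧
      (∀ n y, f n y < l y) ∧
      (∀ y, (⨆ n, f n y) = l y) :=
  lsc_is_sup_of_increasing_smooth_general I l hl hl_range
end
end

section
/- Let B be a smooth manifold and let f, a, b : B → ℝ be smooth functions with 0 < f(p) < a(p) < b(p) < 1 for all p ∈ B. Then there exists a smooth function v : B × (0,1) → ℝ with 0 < v(p,x) ≤ 1 such that: (i) for every (p,x) ∈ B × (0,1), there exists a solution γ : [0,1] → (0,1) of γ'(t) = v(p, γ(t)) with γ(0) = x if and only if x < f(p); and (ii) v = 1 on some neighbourhood of the set {(p,x) : f(p) ≤ x ≤ a(p)} ∪ {(p,x) : x ≥ b(p)} in B × (0,1). -/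
/-!
Put `v = 1 / w`, where the slowness `w(y) = 1 + f · S'((y - c) / d) / d` is built from the smooth
step `S = Real.smoothTransition` and a window `[c, c + d] ⊂ (a, b)`. Its primitive
`F(y) = y + f · S((y - c) / d)` equals `y` below `c` and `y + f` above `c + d`, and along any
solution `F ∘ γ` has derivative `1`. So the solution from `x` stays in `(0, 1)` up to time `1`
iff `F x + 1 < F 1 = 1 + f = 1 + F f`, i.e. iff `x < f`; and `v = 1` off the window.
-/

open Set Filter Function Manifold Real

section Primitive

variable {F w : ℝ → ℝ}

theorem primitive_comp_eq_add_of_hasDerivAt_inv {γ : ℝ → ℝ} {T : ℝ}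
    (hF : ∀ y, HasDerivAt F (w y) y) (hw : ∀ y, w y ≠ 0)
    (hγ : ∀ t ∈ Icc 0 T, HasDerivAt γ (w (γ t))⁻¹ t) :
    ∀ t ∈ Icc 0 T, F (γ t) = F (γ 0) + t := by
  have hFγ : ∀ t ∈ Icc 0 T, HasDerivAt (F ∘ γ) 1 t := fun t ht => by
    simpa [mul_inv_cancel₀ (hw (γ t))] using (hF (γ t)).comp t (hγ t ht)
  have hline : ∀ t : ℝ, HasDerivAt (fun t => F (γ 0) + t) 1 t := fun t =>
    (hasDerivAt_id t).const_add _
  refine eq_of_has_deriv_right_eq (fun t ht => (hFγ t (Ico_subset_Icc_self ht)).hasDerivWithinAt)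
    (fun t _ => (hline t).hasDerivWithinAt) (fun t ht => (hFγ t ht).continuousAt.continuousWithinAt)
    (fun t _ => (hline t).continuousAt.continuousWithinAt) (by simp)

theorem exists_hasDerivAt_inv_of_primitive (hF : ∀ y, HasDerivAt F (w y) y) (hw : ∀ y, 0 < w y)
    (hsurj : Surjective F) (x : ℝ) :
    ∃ γ : ℝ → ℝ, (∀ t, F (γ t) = F x + t) ∧ ∀ t, HasDerivAt γ (w (γ t))⁻¹ t := by
  have hmono : StrictMono F := strictMono_of_hasDerivAt_pos hF hw
  let e : ℝ ≃o ℝ := hmono.orderIsoOfSurjective F hsurj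
  have hFe : ∀ z, F (e.symm z) = z := hmono.orderIsoOfSurjective_self_symm_apply F hsurj
  refine ⟨fun t => e.symm (F x + t), fun t => hFe _, fun t => ?_⟩
  have hinv : HasDerivAt e.symm (w (e.symm (F x + t)))⁻¹ (F x + t) :=
    (hF _).of_local_left_inverse e.symm.toHomeomorph.continuous.continuousAt (hw _).ne'
      (Eventually.of_forall hFe)
  exact hinv.comp_const_add (F x) t

theorem exists_solution_mem_Ioo_iff_of_primitive (hF : ∀ y, HasDerivAt F (w y) y)
    (hw : ∀ y, 0 < w y) (hsurj : Surjective F) {l u T x : ℝ} (hT : 0 ≤ T) (hx : l < x) :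
    (∃ γ : ℝ → ℝ, γ 0 = x ∧ ∀ t ∈ Icc 0 T, γ t ∈ Ioo l u ∧ HasDerivAt γ (w (γ t))⁻¹ t) ↔
      F x + T < F u := by
  have hmono : StrictMono F := strictMono_of_hasDerivAt_pos hF hw
  constructor
  · rintro ⟨γ, rfl, hγ⟩
    have hT' : T ∈ Icc 0 T := right_mem_Icc.2 hT
    rw [← primitive_comp_eq_add_of_hasDerivAt_inv hF (fun y => (hw y).ne')
      (fun t ht => (hγ t ht).2) T hT']
    exact hmono (hγ T hT').1.2
  · intro hxu
    obtain ⟨γ, hFγ, hγ⟩ := exists_hasDerivAt_inv_of_primitive hF hw hsurj x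
    refine ⟨γ, hmono.injective (by simpa using hFγ 0), fun t ht => ⟨⟨?_, ?_⟩, hγ t⟩⟩
    · rw [← hmono.lt_iff_lt, hFγ]
      linarith [hmono hx, ht.1]
    · rw [← hmono.lt_iff_lt, hFγ]
      linarith [ht.2]

end Primitive

noncomputable section Profile

theorem deriv_smoothTransition_eq_zero {x : ℝ} (hx : x < 0 ∨ 1 < x) :
    deriv smoothTransition x = 0 := by
  rcases hx with hx | hx
  · have : smoothTransition =ᶠ[nhds x] fun _ => 0 := by
      filter_upwards [Iio_mem_nhds hx] with y hy using smoothTransition.zero_of_nonpos hy.le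
    rw [this.deriv_eq, deriv_const]
  · have : smoothTransition =ᶠ[nhds x] fun _ => 1 := by
      filter_upwards [Ioi_mem_nhds hx] with y hy using smoothTransition.one_of_one_le hy.le
    rw [this.deriv_eq, deriv_const]

theorem contDiff_deriv_smoothTransition {n : ℕ∞} : ContDiff ℝ n (deriv smoothTransition) :=
  (contDiff_infty_iff_deriv.mp smoothTransition.contDiff).2.of_le (by exact_mod_cast le_top)

def arrivalTime (s c d y : ℝ) : ℝ := y + s * smoothTransition ((y - c) / d)

def slowness (s c d y : ℝ) : ℝ := 1 + s * (deriv smoothTransition ((y - c) / d) / d)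

variable {s c d y : ℝ}

theorem hasDerivAt_arrivalTime (s c d y : ℝ) :
    HasDerivAt (arrivalTime s c d) (slowness s c d y) y := by
  have hS : HasDerivAt (fun y => smoothTransition ((y - c) / d))
      (deriv smoothTransition ((y - c) / d) * (1 / d)) y :=
    (smoothTransition.contDiff (n := 1).differentiable one_ne_zero _).hasDerivAt.comp y
      (((hasDerivAt_id y).sub_const c).div_const d)
  have h := (hasDerivAt_id' y).add (hS.const_mul s)
  rwa [← div_eq_mul_one_div] at h

theorem one_le_slowness (hs : 0 ≤ s) (hd : 0 ≤ d) : 1 ≤ slowness s c d y :=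
  le_add_of_nonneg_right (mul_nonneg hs (div_nonneg smoothTransition.monotone.deriv_nonneg hd))

theorem slowness_pos (hs : 0 ≤ s) (hd : 0 ≤ d) : 0 < slowness s c d y :=
  one_pos.trans_le (one_le_slowness hs hd)

theorem slowness_eq_one (hd : 0 < d) (hy : y < c ∨ c + d < y) : slowness s c d y = 1 := by
  have : (y - c) / d < 0 ∨ 1 < (y - c) / d := by
    rw [div_neg_iff, one_lt_div hd]
    refine hy.imp (fun h => Or.inr ⟨by linarith, hd⟩) (fun h => by linarith)
  simp [slowness, deriv_smoothTransition_eq_zero this]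

theorem arrivalTime_of_le (hd : 0 ≤ d) (hy : y ≤ c) : arrivalTime s c d y = y := by
  simp [arrivalTime, smoothTransition.zero_of_nonpos (div_nonpos_of_nonpos_of_nonneg
    (sub_nonpos.2 hy) hd)]

theorem arrivalTime_of_ge (hd : 0 < d) (hy : c + d ≤ y) : arrivalTime s c d y = y + s := by
  simp [arrivalTime, smoothTransition.one_of_one_le ((one_le_div₀ hd).2 (le_sub_iff_add_le'.2 hy))]

theorem arrivalTime_surjective (hs : 0 ≤ s) : Surjective (arrivalTime s c d) := by
  have hlow : ∀ y, y ≤ arrivalTime s c d y := fun y =>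
    le_add_of_nonneg_right (mul_nonneg hs (smoothTransition.nonneg _))
  have hhigh : ∀ y, arrivalTime s c d y ≤ y + s := fun y =>
    add_le_add_right (mul_le_of_le_one_right hs (smoothTransition.le_one _)) y
  refine (continuous_id.add (continuous_const.mul (smoothTransition.continuous.comp
    ((continuous_id.sub continuous_const).div_const d)))).surjective
    (tendsto_atTop_mono hlow tendsto_id) (tendsto_atBot_mono hhigh ?_)
  exact tendsto_atBot_add_const_right _ s tendsto_id

theorem strictMono_arrivalTime (hs : 0 ≤ s) (hd : 0 ≤ d) : StrictMono (arrivalTime s c d) :=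
  strictMono_of_hasDerivAt_pos (hasDerivAt_arrivalTime s c d) fun _ => slowness_pos hs hd

theorem exists_solution_slowness_iff (hs : 0 ≤ s) (hsc : s ≤ c) (hd : 0 < d) (hcd : c + d ≤ 1)
    {x : ℝ} (hx : 0 < x) :
    (∃ γ : ℝ → ℝ, γ 0 = x ∧
        ∀ t ∈ Icc (0 : ℝ) 1, γ t ∈ Ioo 0 1 ∧ HasDerivAt γ (slowness s c d (γ t))⁻¹ t) ↔
      x < s := by
  rw [exists_solution_mem_Ioo_iff_of_primitive (hasDerivAt_arrivalTime s c d)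
    (fun _ => slowness_pos hs hd.le) (arrivalTime_surjective hs) zero_le_one hx,
    arrivalTime_of_ge hd hcd, add_comm, add_lt_add_iff_left]
  simpa only [arrivalTime_of_le hd.le hsc] using
    (strictMono_arrivalTime (c := c) hs hd.le).lt_iff_lt (a := x) (b := s)

theorem ContMDiff.slowness {E H M : Type*} [NormedAddCommGroup E] [NormedSpace ℝ E]
    [TopologicalSpace H] {I : ModelWithCorners ℝ E H} [TopologicalSpace M] [ChartedSpace H M]
    {n : ℕ∞} {s c d y : M → ℝ} (hs : ContMDiff I 𝓘(ℝ, ℝ) n s) (hc : ContMDiff I 𝓘(ℝ, ℝ) n c)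
    (hd : ContMDiff I 𝓘(ℝ, ℝ) n d) (hy : ContMDiff I 𝓘(ℝ, ℝ) n y) (hd0 : ∀ m, d m ≠ 0) :
    ContMDiff I 𝓘(ℝ, ℝ) n fun m => slowness (s m) (c m) (d m) (y m) :=
  contMDiff_const.add <| hs.mul <|
    (contDiff_deriv_smoothTransition.comp_contMDiff ((hy.sub hc).div₀ hd hd0)).div₀ hd hd0

end Profile

theorem adjust_time_one_general
    {E : Type*} [NormedAddCommGroup E] [NormedSpace ℝ E]
    {H : Type*} [TopologicalSpace H] (I : ModelWithCorners ℝ E H)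
    {B : Type*} [TopologicalSpace B] [ChartedSpace H B]
    (f a b : B → ℝ)
    (hf : ContMDiff I 𝓘(ℝ, ℝ) (⊤ : ℕ∞) f) (ha : ContMDiff I 𝓘(ℝ, ℝ) (⊤ : ℕ∞) a)
    (hb : ContMDiff I 𝓘(ℝ, ℝ) (⊤ : ℕ∞) b)
    (horder : ∀ p, 0 < f p ∧ f p < a p ∧ a p < b p ∧ b p < 1) :
    ∃ v : B × ℝ → ℝ,
      ContMDiffOn (I.prod 𝓘(ℝ, ℝ)) 𝓘(ℝ, ℝ) (⊤ : ℕ∞) v (univ ×ˢ Ioo (0 : ℝ) 1) ∧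
      (∀ p : B, ∀ x ∈ Ioo (0 : ℝ) 1, v (p, x) ∈ Ioc (0:ℝ) 1) ∧
      -- (i)
      (∀ p : B, ∀ x ∈ Ioo (0 : ℝ) 1,
        ((∃ γ : ℝ → ℝ, γ 0 = x ∧
            ∀ t ∈ Icc (0:ℝ) 1, γ t ∈ Ioo (0 : ℝ) 1 ∧ HasDerivAt γ (v (p, γ t)) t)
          ↔ x < f p)) ∧
      -- (ii)
      (∃ U : Set (B × ℝ), IsOpen U ∧
        {q : B × ℝ | q.2 ∈ Ioo (0:ℝ) 1 ∧
          ((f q.1 ≤ q.2 ∧ q.2 ≤ a q.1) ∨ b q.1 ≤ q.2)} ⊆ U ∧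
        ∀ q ∈ U ∩ (univ ×ˢ Ioo (0 : ℝ) 1), v q = 1) := by
  set d : B → ℝ := fun p => (b p - a p) / 3
  set c : B → ℝ := fun p => a p + d p
  have hd : ∀ p, 0 < d p := fun p => div_pos (sub_pos.2 (horder p).2.2.1) three_pos
  have hac : ∀ p, a p < c p := fun p => lt_add_of_pos_right _ (hd p)
  have hcb : ∀ p, c p + d p < b p := fun p => by
    change a p + (b p - a p) / 3 + (b p - a p) / 3 < b p
    linarith [(horder p).2.2.1]
  have hds : ContMDiff I 𝓘(ℝ, ℝ) (⊤ : ℕ∞) d := (hb.sub ha).div_const 3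
  have hcs : ContMDiff I 𝓘(ℝ, ℝ) (⊤ : ℕ∞) c := ha.add hds
  refine ⟨fun q => (slowness (f q.1) (c q.1) (d q.1) q.2)⁻¹, ?_, fun p x _ => ?_,
    fun p x hx => ?_, ⟨{q | q.2 < c q.1} ∪ {q | c q.1 + d q.1 < q.2}, ?_, ?_, ?_⟩⟩
  · have hfst : ContMDiff (I.prod 𝓘(ℝ, ℝ)) I (⊤ : ℕ∞) (Prod.fst : B × ℝ → B) := contMDiff_fst
    have hw := (hf.comp hfst).slowness (hcs.comp hfst) (hds.comp hfst) contMDiff_snd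
      fun q => (hd q.1).ne'
    exact (hw.inv₀ fun q => (slowness_pos (horder q.1).1.le (hd q.1).le).ne').contMDiffOn
  · exact ⟨inv_pos.2 (slowness_pos (horder p).1.le (hd p).le),
      inv_le_one_of_one_le₀ (one_le_slowness (horder p).1.le (hd p).le)⟩
  · obtain ⟨hf0, hfa, -, hb1⟩ := horder p
    exact exists_solution_slowness_iff hf0.le (hfa.trans (hac p)).le (hd p)
      ((hcb p).trans hb1).le hx.1
  · have hc : Continuous fun q : B × ℝ => c q.1 := hcs.continuous.fst'
    have hd' : Continuous fun q : B × ℝ => d q.1 := hds.continuous.fst'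
    exact (isOpen_lt continuous_snd hc).union (isOpen_lt (hc.add hd') continuous_snd)
  · rintro ⟨p, x⟩ ⟨-, ⟨-, hxa⟩ | hbx⟩
    exacts [Or.inl (hxa.trans_lt (hac p)), Or.inr ((hcb p).trans_le hbx)]
  · rintro ⟨p, x⟩ ⟨hU, -⟩
    exact inv_eq_one.2 (slowness_eq_one (hd p) hU)

/-- Let `f, a, b : B → ℝ` be smooth with `0 < f < a < b < 1`.  Then there is a smooth
`v : B × (0,1) → (0,1]` such that: (i) for the parametrized ODE `γ' = v(p,γ)` valued
in `(0,1)`, a solution on `[0,1]` starting at `x` exists iff `x < f p`; and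
(ii) `v = 1` on a neighbourhood of `{(p,x) : f p ≤ x ≤ a p or x ≥ b p}` in `B × (0,1)`. -/
theorem adjust_time_one
    {E : Type*} [NormedAddCommGroup E] [NormedSpace ℝ E] [FiniteDimensional ℝ E]
    {H : Type*} [TopologicalSpace H] (I : ModelWithCorners ℝ E H) [I.Boundaryless]
    {B : Type*} [TopologicalSpace B] [ChartedSpace H B]
    [IsManifold I (⊤ : ℕ∞) B] [T2Space B] [SecondCountableTopology B]
    (f a b : B → ℝ)
    (hf : ContMDiff I 𝓘(ℝ, ℝ) (⊤ : ℕ∞) f) (ha : ContMDiff I 𝓘(ℝ, ℝ) (⊤ : ℕ∞) a)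
    (hb : ContMDiff I 𝓘(ℝ, ℝ) (⊤ : ℕ∞) b)
    (horder : ∀ p, 0 < f p ∧ f p < a p ∧ a p < b p ∧ b p < 1) :
    ∃ v : B × ℝ → ℝ,
      ContMDiffOn (I.prod 𝓘(ℝ, ℝ)) 𝓘(ℝ, ℝ) (⊤ : ℕ∞) v (univ ×ˢ Ioo (0 : ℝ) 1) ∧
      (∀ p : B, ∀ x ∈ Ioo (0 : ℝ) 1, v (p, x) ∈ Ioc (0:ℝ) 1) ∧
      -- (i)
      (∀ p : B, ∀ x ∈ Ioo (0 : ℝ) 1,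
        ((∃ γ : ℝ → ℝ, γ 0 = x ∧
            ∀ t ∈ Icc (0:ℝ) 1, γ t ∈ Ioo (0 : ℝ) 1 ∧ HasDerivAt γ (v (p, γ t)) t)
          ↔ x < f p)) ∧
      -- (ii)
      (∃ U : Set (B × ℝ), IsOpen U ∧
        {q : B × ℝ | q.2 ∈ Ioo (0:ℝ) 1 ∧
          ((f q.1 ≤ q.2 ∧ q.2 ≤ a q.1) ∨ b q.1 ≤ q.2)} ⊆ U ∧
        ∀ q ∈ U ∩ (univ ×ˢ Ioo (0 : ℝ) 1), v q = 1) :=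
  adjust_time_one_general I f a b hf ha hb horder
end
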